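/- arXiv:1405.7748 — 2 statements merged into one kernel-verified Lean document; each statement's English description precedes it below -/
import Mathlib

section
/- For quadratic utility U(q,θ) = (1/2)(q̄² - (q - q̄)²)θ and cost g(q) = ζq, the function F(q) = -p(U(q, θ_high) - U(q, θ_low)) + (1-p)(U(q, θ_low) - g(q)) on [0, q̄] is maximized at q_L* = q̄ - (1-p)ζ/((1-p)θ_low - p(θ_high - θ_low)) when (1-p)θ_low - p(θ_high - θ_low) > (1-p)ζ/q̄, and at q_L* = 0 when (1-p)θ_low - p(θ_high - θ_low) ≤ 0. -/
/-- For the quadratic screening example, the low-type objective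
F(q) = -p(U(q,θ_high) - U(q,θ_low)) + (1-p)(U(q,θ_low) - g(q)) on [0, q̄] is
maximized at q̄ - (1-p)ζ/D when D := (1-p)θ_low - p(θ_high - θ_low) > (1-p)ζ/q̄,
and at 0 when D ≤ 0. -/
theorem stmt_4 (qbar θ_low θ_high ζ p : ℝ)
    (hqbar : 0 < qbar) (hθl : 0 < θ_low) (hθ : θ_low < θ_high) (hζ : 0 < ζ)
    (hp : p ∈ Set.Ioo (0 : ℝ) 1)
    (U : ℝ → ℝ → ℝ) (hU : ∀ q θ, U q θ = (1/2) * (qbar^2 - (q - qbar)^2) * θ)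
    (F : ℝ → ℝ)
    (hF : ∀ q, F q = -p * (U q θ_high - U q θ_low) + (1 - p) * (U q θ_low - ζ * q)) :
    ((1 - p) * θ_low - p * (θ_high - θ_low) > (1 - p) * ζ / qbar →
      IsMaxOn F (Set.Icc 0 qbar)
        (qbar - (1 - p) * ζ / ((1 - p) * θ_low - p * (θ_high - θ_low)))) ∧
    ((1 - p) * θ_low - p * (θ_high - θ_low) ≤ 0 →
      IsMaxOn F (Set.Icc 0 qbar) 0) := by
  obtain ⟨hp0, hp1⟩ := hp
  have hc : 0 < (1 - p) * ζ := mul_pos (by linarith) hζ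
  constructor
  · intro hD
    have hDpos : 0 < (1 - p) * θ_low - p * (θ_high - θ_low) :=
      lt_trans (div_pos hc hqbar) hD
    set D := (1 - p) * θ_low - p * (θ_high - θ_low) with hDdef
    set E := (1 - p) * ζ / D with hEdef
    have hE : E * D = (1 - p) * ζ := div_mul_cancel₀ _ (ne_of_gt hDpos)
    intro q hq
    simp only [Set.mem_Icc] at hq
    simp only [Set.mem_setOf_eq, hF, hU]
    have hE2 : E * E * D = E * ((1 - p) * ζ) := by rw [mul_assoc, hE]
    nlinarith [mul_nonneg hDpos.le (sq_nonneg (q - qbar + E)), hE2, hE]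
  · intro hD q hq
    simp only [Set.mem_Icc] at hq
    simp only [Set.mem_setOf_eq, hF, hU]
    have hX : (0:ℝ) ≤ qbar ^ 2 - (q - qbar) ^ 2 := by nlinarith [hq.1, hq.2]
    nlinarith [mul_nonneg (neg_nonneg.2 hD) hX, mul_nonneg hc.le hq.1]
end

section
/- In the asymmetric-information quadratic screening example, the optimal low-type quality q_L* satisfies q_L* ≤ q_L† = q̄ - ζ/θ_low, the full-information optimum; i.e., asymmetric information distorts the low type's allocation downward. -/
/-- Under asymmetric information, any optimal low-type quality q_L*
satisfies q_L* ≤ q_L† = q̄ - ζ/θ_low, the full-information optimum: asymmetric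
information distorts the low type's allocation downward. -/
theorem stmt_5 (qbar θ_low θ_high ζ p : ℝ)
    (hqbar : 0 < qbar) (hθl : 0 < θ_low) (hθ : θ_low < θ_high) (hζ : 0 < ζ)
    (hle : ζ / θ_low ≤ qbar) (hp : p ∈ Set.Ioo (0 : ℝ) 1)
    (U : ℝ → ℝ → ℝ) (hU : ∀ q θ, U q θ = (1/2) * (qbar^2 - (q - qbar)^2) * θ)
    (qLstar : ℝ) (hmem : qLstar ∈ Set.Icc 0 qbar)
    (hmax : IsMaxOn
      (fun q => -p * (U q θ_high - U q θ_low) + (1 - p) * (U q θ_low - ζ * q))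
      (Set.Icc 0 qbar) qLstar) :
    qLstar ≤ qbar - ζ / θ_low := by
  by_contra h
  push_neg at h
  set c : ℝ := ζ / θ_low with hc
  have hcθ : c * θ_low = ζ := div_mul_cancel₀ ζ (ne_of_gt hθl)
  have hcpos : 0 < c := div_pos hζ hθl
  have hdag : qbar - c ∈ Set.Icc (0:ℝ) qbar := by
    constructor <;> nlinarith
  have hkey := hmax hdag
  simp only [hU, Set.mem_setOf_eq] at hkey
  obtain ⟨hp0, hp1⟩ := hp
  obtain ⟨h0, h1⟩ := hmem
  rw [← hcθ] at hkey
  have hd : 0 < qLstar - (qbar - c) := sub_pos.mpr h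
  have h2c : 0 < 2 * c - (qLstar - (qbar - c)) := by nlinarith
  nlinarith [mul_pos hp0 (mul_pos (sub_pos.mpr hθ) (mul_pos hd h2c)),
    mul_pos (sub_pos.mpr hp1) (mul_pos hθl (mul_pos hd hd))]
end
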